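/- Fix k ≥ 1, ω ∈ ℝ, g ∈ ℂ, and define on finitely supported sequences in ℓ²(ℕ) the operators H_± := ω N ± (ḡ a^k + g (a†)^k), where N is the number operator and a, a† the annihilation/creation operators. Let X_k e_m = (−1)^(⌊m/k⌋) e_m be the generalized parity. Then X_k H₊ = H₋ X_k on finitely supported sequences. -/

import Mathlib

open scoped ComplexConjugate

/-!
Both `a ^ k` and `(a†) ^ k` move every basis vector `e_m` to a multiple of `e_{m ∓ k}` (or to `0`),
and the generalized parity takes opposite values on `e_m` and `e_{m + k}`; hence `X_k` anticommutes
with the coupling term. Being diagonal, `X_k` commutes with the number operator `N`.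
-/

open Finsupp

namespace Module.End

variable {R : Type*} [CommRing R]

def LowersBy (j : ℕ) (a : Module.End R (ℕ →₀ R)) : Prop :=
  ∀ m, (m < j → a (single m 1) = 0) ∧ ∃ z : R, a (single (m + j) 1) = z • single m 1

def RaisesBy (j : ℕ) (c : Module.End R (ℕ →₀ R)) : Prop :=
  ∀ m, ∃ z : R, c (single m 1) = z • single (m + j) 1

theorem ext_single {f f' : Module.End R (ℕ →₀ R)} (h : ∀ m, f (single m 1) = f' (single m 1)) :
    f = f' :=
  Finsupp.basisSingleOne.ext fun m => by simpa using h m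

theorem lowersBy_one {a : Module.End R (ℕ →₀ R)} (ha0 : a (single 0 1) = 0)
    (ha : ∀ n, ∃ z : R, a (single (n + 1) 1) = z • single n 1) : LowersBy 1 a := by
  intro m
  refine ⟨fun hm => ?_, ha m⟩
  rwa [Nat.lt_one_iff.mp hm]

theorem LowersBy.mul {i j : ℕ} {a b : Module.End R (ℕ →₀ R)} (ha : LowersBy i a)
    (hb : LowersBy j b) : LowersBy (i + j) (a * b) := by
  intro m
  constructor
  · intro hm
    rw [mul_apply]
    by_cases hmj : m < j
    · rw [(hb m).1 hmj, map_zero]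
    · obtain ⟨n, rfl⟩ := Nat.exists_eq_add_of_le' (not_lt.mp hmj)
      obtain ⟨z, hz⟩ := (hb n).2
      rw [hz, map_smul, (ha n).1 (by omega), smul_zero]
  · obtain ⟨z, hz⟩ := (hb (m + i)).2
    obtain ⟨w, hw⟩ := (ha m).2
    exact ⟨z * w, by rw [mul_apply, ← add_assoc, hz, map_smul, hw, smul_smul]⟩

theorem RaisesBy.mul {i j : ℕ} {c d : Module.End R (ℕ →₀ R)} (hc : RaisesBy i c)
    (hd : RaisesBy j d) : RaisesBy (i + j) (c * d) := by
  intro m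
  obtain ⟨z, hz⟩ := hd m
  obtain ⟨w, hw⟩ := hc (m + j)
  exact ⟨z * w, by rw [mul_apply, hz, map_smul, hw, smul_smul, add_assoc, add_comm j]⟩

theorem LowersBy.pow {a : Module.End R (ℕ →₀ R)} (ha : LowersBy 1 a) (j : ℕ) :
    LowersBy j (a ^ j) := by
  induction j with
  | zero => exact fun m => ⟨fun h => absurd h (Nat.not_lt_zero m), 1, by simp⟩
  | succ j ih => rw [pow_succ', add_comm]; exact ha.mul ih

theorem RaisesBy.pow {c : Module.End R (ℕ →₀ R)} (hc : RaisesBy 1 c) (j : ℕ) :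
    RaisesBy j (c ^ j) := by
  induction j with
  | zero => exact fun m => ⟨1, by simp⟩
  | succ j ih => rw [pow_succ', add_comm]; exact hc.mul ih

section Diagonal

variable {X : Module.End R (ℕ →₀ R)} {s : ℕ → R}

theorem commute_of_diagonal {N : Module.End R (ℕ →₀ R)} {t : ℕ → R}
    (hX : ∀ m, X (single m 1) = s m • single m 1) (hN : ∀ m, N (single m 1) = t m • single m 1) :
    Commute X N :=
  ext_single fun m => by
    simp only [mul_apply, hX, hN, map_smul, smul_smul, mul_comm]

theorem LowersBy.diagonal_mul {k : ℕ} {a : Module.End R (ℕ →₀ R)} (ha : LowersBy k a)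
    (hX : ∀ m, X (single m 1) = s m • single m 1) (hs : ∀ m, s (m + k) = -s m) :
    X * a = -(a * X) := by
  refine ext_single fun m => ?_
  simp only [LinearMap.neg_apply, mul_apply, hX, map_smul]
  rcases lt_or_ge m k with hm | hm
  · simp [(ha m).1 hm]
  · obtain ⟨n, rfl⟩ := Nat.exists_eq_add_of_le' hm
    obtain ⟨z, hz⟩ := (ha n).2
    rw [hz, map_smul, hX, hs, smul_smul, smul_smul, ← neg_smul]
    ring_nf

theorem RaisesBy.diagonal_mul {k : ℕ} {c : Module.End R (ℕ →₀ R)} (hc : RaisesBy k c)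
    (hX : ∀ m, X (single m 1) = s m • single m 1) (hs : ∀ m, s (m + k) = -s m) :
    X * c = -(c * X) := by
  refine ext_single fun m => ?_
  obtain ⟨z, hz⟩ := hc m
  simp only [LinearMap.neg_apply, mul_apply, hX, map_smul, hz, hs, smul_smul, ← neg_smul]
  ring_nf

end Diagonal

end Module.End

theorem neg_one_pow_add_div_self {R : Type*} [Ring R] {k : ℕ} (hk : 0 < k) (m : ℕ) :
    (-1 : R) ^ ((m + k) / k) = -(-1) ^ (m / k) := by
  rw [Nat.add_div_right m hk, pow_succ, mul_neg_one]

open Module.End in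
theorem stmt_14 (k : ℕ) (hk : 1 ≤ k) (ω : ℝ) (g : ℂ)
    (N a c X : Module.End ℂ (ℕ →₀ ℂ))
    (hN : ∀ n : ℕ, N (Finsupp.single n 1) = (n : ℂ) • Finsupp.single n 1)
    (ha0 : a (Finsupp.single 0 1) = 0)
    (ha : ∀ n : ℕ, a (Finsupp.single (n + 1) 1) =
      (Real.sqrt (n + 1) : ℂ) • Finsupp.single n 1)
    (hc : ∀ n : ℕ, c (Finsupp.single n 1) =
      (Real.sqrt (n + 1) : ℂ) • Finsupp.single (n + 1) 1)
    (hX : ∀ m : ℕ, X (Finsupp.single m 1) =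
      (-1 : ℂ) ^ (m / k) • Finsupp.single m 1) :
    X * ((ω : ℂ) • N + (conj g • a ^ k + g • c ^ k)) =
      ((ω : ℂ) • N - (conj g • a ^ k + g • c ^ k)) * X := by
  have hs := neg_one_pow_add_div_self (R := ℂ) hk
  have hXN : X * N = N * X := commute_of_diagonal hX hN
  have hXa : X * a ^ k = -(a ^ k * X) :=
    ((lowersBy_one ha0 fun n => ⟨_, ha n⟩).pow k).diagonal_mul hX hs
  have hXc : X * c ^ k = -(c ^ k * X) :=
    ((show RaisesBy 1 c from fun n => ⟨_, hc n⟩).pow k).diagonal_mul hX hs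
  rw [mul_add, mul_add, mul_smul_comm, mul_smul_comm, mul_smul_comm, hXN, hXa, hXc]
  -- `ℕ →₀ ℂ` enters only as an additive monoid, so `-` on `Module.End` is `LinearMap`'s and the
  -- ring lemma `sub_mul` does not apply.
  simp only [Module.End.mul_eq_comp, LinearMap.sub_comp, LinearMap.add_comp, LinearMap.smul_comp]
  module
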